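/- Let u : ℝ³ → ℝ be twice continuously differentiable in (x,y,t) satisfying u_t u_{xy} + u_y u_{xt} + u_x u_{yt} = 0 at every point. Then the following three conservation laws hold at every point: (1) ∂_y(u_x² u_t) + ∂_t(u_x² u_y) = 0; (2) ∂_x(u_y² u_t) + ∂_t(u_y² u_x) = 0; (3) ∂_x(u_t² u_y) + ∂_y(u_t² u_x) = 0. Moreover, each of these three conservation laws is characteristic: writing F⁽¹⁾ = (0, p₁² p₃, p₁² p₂), F⁽²⁾ = (p₂² p₃, 0, p₂² p₁), F⁽³⁾ = (p₃² p₂, p₃² p₁, 0) and letting g be the symmetric matrix with zero diagonal and entries g₁₂ = p₃/2, g₁₃ = p₂/2, g₂₃ = p₁/2, one has F⁽ⁱ⁾ · adj(g) · (F⁽ⁱ⁾)ᵀ = 0 for i = 1, 2, 3 and all real p₁, p₂, p₃, where adj denotes the adjugate matrix. -/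

import Mathlib

/-!
Writing `u_a` for the derivative of `u` in direction `a`, the Leibniz rule and the symmetry of
the Hessian give
`∂_b (u_a² u_c) + ∂_c (u_a² u_b) = 2 u_a (u_a u_bc + u_b u_ca + u_c u_ab)`,
and the bracket is symmetric in `a, b, c`; for the three coordinate directions it is the
left-hand side of the equation, so each of the three fluxes is conserved. For the symbol `g(p)`
the quadratic form of `adj g(p)` is `((p·F)² - 2 Σ (pᵢ Fᵢ)²) / 4`, which vanishes on each flux.
-/

open Matrix

/-- Partial derivative with respect to the first variable `x`. -/
noncomputable def pdx (f : ℝ × ℝ × ℝ → ℝ) (p : ℝ × ℝ × ℝ) : ℝ :=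
  deriv (fun s => f (s, p.2.1, p.2.2)) p.1

/-- Partial derivative with respect to the second variable `y`. -/
noncomputable def pdy (f : ℝ × ℝ × ℝ → ℝ) (p : ℝ × ℝ × ℝ) : ℝ :=
  deriv (fun s => f (p.1, s, p.2.2)) p.2.1

/-- Partial derivative with respect to the third variable `t`. -/
noncomputable def pdt (f : ℝ × ℝ × ℝ → ℝ) (p : ℝ × ℝ × ℝ) : ℝ :=
  deriv (fun s => f (p.1, p.2.1, s)) p.2.2

section Directional

variable {E : Type*} [NormedAddCommGroup E] [NormedSpace ℝ E]

theorem fderiv_sq_mul_apply {f g : E → ℝ} {q : E} (hf : DifferentiableAt ℝ f q)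
    (hg : DifferentiableAt ℝ g q) (v : E) :
    fderiv ℝ (fun x => f x ^ 2 * g x) q v
      = 2 * f q * fderiv ℝ f q v * g q + f q ^ 2 * fderiv ℝ g q v := by
  rw [fderiv_fun_mul (c := fun x => f x ^ 2) (hf.pow 2) hg, fderiv_fun_pow 2 hf]
  simp only [Nat.add_one_sub_one, pow_one, nsmul_eq_mul, Nat.cast_ofNat,
    _root_.add_apply, _root_.smul_apply, smul_eq_mul]
  ring

theorem fderiv_fderiv_apply {u : E → ℝ} {q : E} (hu : DifferentiableAt ℝ (fderiv ℝ u) q)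
    (v w : E) :
    fderiv ℝ (fun x => fderiv ℝ u x v) q w = fderiv ℝ (fderiv ℝ u) q w v := by
  rw [fderiv_clm_apply hu (differentiableAt_const v)]
  simp only [fderiv_fun_const, Pi.zero_apply, ContinuousLinearMap.comp_zero, zero_add,
    ContinuousLinearMap.flip_apply]

/-- `u_a u_bc + u_b u_ca + u_c u_ab`, where `fderiv ℝ (fderiv ℝ u) q b c` is `∂_b ∂_c u`. -/
noncomputable def gradHessCyclicSum (u : E → ℝ) (q a b c : E) : ℝ :=
  fderiv ℝ u q a * fderiv ℝ (fderiv ℝ u) q b c + fderiv ℝ u q b * fderiv ℝ (fderiv ℝ u) q c a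
    + fderiv ℝ u q c * fderiv ℝ (fderiv ℝ u) q a b

theorem gradHessCyclicSum_swap {u : E → ℝ} {q : E} (hu : IsSymmSndFDerivAt ℝ u q)
    (a b c : E) : gradHessCyclicSum u q b a c = gradHessCyclicSum u q a b c := by
  unfold gradHessCyclicSum
  linear_combination -fderiv ℝ u q b * hu c a + fderiv ℝ u q a * hu c b
    + fderiv ℝ u q c * hu b a

theorem gradHessCyclicSum_rotate (u : E → ℝ) (q a b c : E) :
    gradHessCyclicSum u q c a b = gradHessCyclicSum u q a b c := by
  unfold gradHessCyclicSum
  ring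

theorem fderiv_sq_mul_add_fderiv_sq_mul {u : E → ℝ} {q : E} (hu : ContDiffAt ℝ 2 u q)
    (a b c : E) :
    fderiv ℝ (fun x => fderiv ℝ u x a ^ 2 * fderiv ℝ u x c) q b
      + fderiv ℝ (fun x => fderiv ℝ u x a ^ 2 * fderiv ℝ u x b) q c
      = 2 * fderiv ℝ u q a * gradHessCyclicSum u q a b c := by
  have hD : DifferentiableAt ℝ (fderiv ℝ u) q :=
    (hu.fderiv_right (m := 1) le_rfl).differentiableAt one_ne_zero
  have hDv (v : E) : DifferentiableAt ℝ (fun x => fderiv ℝ u x v) q :=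
    hD.clm_apply (differentiableAt_const v)
  have hsymm : IsSymmSndFDerivAt ℝ u q := hu.isSymmSndFDerivAt (by simp)
  rw [fderiv_sq_mul_apply (hDv a) (hDv c), fderiv_sq_mul_apply (hDv a) (hDv b)]
  simp only [fderiv_fderiv_apply hD, gradHessCyclicSum]
  linear_combination 2 * fderiv ℝ u q a * fderiv ℝ u q c * hsymm b a
    - fderiv ℝ u q a ^ 2 * hsymm b c

theorem ContDiff.differentiable_fderiv {u : E → ℝ} (hu : ContDiff ℝ 2 u) :
    Differentiable ℝ (fderiv ℝ u) :=
  (hu.fderiv_right (m := 1) le_rfl).differentiable one_ne_zero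

theorem ContDiff.differentiable_fderiv_apply {u : E → ℝ} (hu : ContDiff ℝ 2 u) (v : E) :
    Differentiable ℝ (fun x => fderiv ℝ u x v) :=
  hu.differentiable_fderiv.clm_apply (differentiable_const v)

theorem ContDiff.differentiable_fderiv_apply_sq_mul {u : E → ℝ} (hu : ContDiff ℝ 2 u)
    (a c : E) : Differentiable ℝ (fun x => fderiv ℝ u x a ^ 2 * fderiv ℝ u x c) :=
  ((hu.differentiable_fderiv_apply a).pow 2).mul (hu.differentiable_fderiv_apply c)

end Directional

section Coordinates

theorem pdx_eq_fderiv {f : ℝ × ℝ × ℝ → ℝ} (hf : Differentiable ℝ f) :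
    pdx f = fun p => fderiv ℝ f p (1, 0, 0) :=
  funext fun p => ((hf p).hasFDerivAt.comp_hasDerivAt p.1 ((hasDerivAt_id _).prodMk
    ((hasDerivAt_const _ _).prodMk (hasDerivAt_const _ _)))).deriv

theorem pdy_eq_fderiv {f : ℝ × ℝ × ℝ → ℝ} (hf : Differentiable ℝ f) :
    pdy f = fun p => fderiv ℝ f p (0, 1, 0) :=
  funext fun p => ((hf p).hasFDerivAt.comp_hasDerivAt p.2.1 ((hasDerivAt_const _ _).prodMk
    ((hasDerivAt_id _).prodMk (hasDerivAt_const _ _)))).deriv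

theorem pdt_eq_fderiv {f : ℝ × ℝ × ℝ → ℝ} (hf : Differentiable ℝ f) :
    pdt f = fun p => fderiv ℝ f p (0, 0, 1) :=
  funext fun p => ((hf p).hasFDerivAt.comp_hasDerivAt p.2.2 ((hasDerivAt_const _ _).prodMk
    ((hasDerivAt_const _ _).prodMk (hasDerivAt_id _)))).deriv

variable {u : ℝ × ℝ × ℝ → ℝ}

theorem pdt_mul_pdy_pdx_add_eq_gradHessCyclicSum (hu : ContDiff ℝ 2 u) (p : ℝ × ℝ × ℝ) :
    pdt u p * pdy (pdx u) p + pdy u p * pdt (pdx u) p + pdx u p * pdt (pdy u) p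
      = gradHessCyclicSum u p (1, 0, 0) (0, 1, 0) (0, 0, 1) := by
  have hD := hu.differentiable_fderiv
  have hsymm : IsSymmSndFDerivAt ℝ u p := hu.contDiffAt.isSymmSndFDerivAt (by simp)
  have hu' : Differentiable ℝ u := hu.differentiable two_ne_zero
  simp only [pdx_eq_fderiv hu', pdy_eq_fderiv hu', pdt_eq_fderiv hu',
    pdy_eq_fderiv (hu.differentiable_fderiv_apply _),
    pdt_eq_fderiv (hu.differentiable_fderiv_apply _), fderiv_fderiv_apply (hD p), gradHessCyclicSum]
  linear_combination -fderiv ℝ u p (1, 0, 0) * hsymm (0, 1, 0) (0, 0, 1)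
    - fderiv ℝ u p (0, 0, 1) * hsymm (1, 0, 0) (0, 1, 0)

end Coordinates

theorem dotProduct_adjugate_symbol_mulVec (p₁ p₂ p₃ F₁ F₂ F₃ : ℝ) :
    ![F₁, F₂, F₃] ⬝ᵥ ((!![0, p₃ / 2, p₂ / 2; p₃ / 2, 0, p₁ / 2; p₂ / 2, p₁ / 2,
        (0 : ℝ)]).adjugate *ᵥ ![F₁, F₂, F₃])
      = ((p₁ * F₁ + p₂ * F₂ + p₃ * F₃) ^ 2
          - 2 * ((p₁ * F₁) ^ 2 + (p₂ * F₂) ^ 2 + (p₃ * F₃) ^ 2)) / 4 := by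
  simp only [adjugate_fin_three, dotProduct, mulVec, Fin.sum_univ_three, of_apply, cons_val',
    cons_val, cons_val_zero, cons_val_one, cons_val_fin_one]
  ring

/-- The equation `u_t u_{xy} + u_y u_{xt} + u_x u_{yt} = 0` possesses exactly three
characteristic conservation laws. -/
theorem linearly_nondegenerate_equation_three_characteristic_integrals
    (u : ℝ × ℝ × ℝ → ℝ) (hu : ContDiff ℝ 2 u)
    (heq : ∀ p : ℝ × ℝ × ℝ,
      pdt u p * pdy (pdx u) p + pdy u p * pdt (pdx u) p
        + pdx u p * pdt (pdy u) p = 0) :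
    ((∀ p : ℝ × ℝ × ℝ,
        pdy (fun q => (pdx u q) ^ 2 * pdt u q) p
          + pdt (fun q => (pdx u q) ^ 2 * pdy u q) p = 0) ∧
     (∀ p : ℝ × ℝ × ℝ,
        pdx (fun q => (pdy u q) ^ 2 * pdt u q) p
          + pdt (fun q => (pdy u q) ^ 2 * pdx u q) p = 0) ∧
     (∀ p : ℝ × ℝ × ℝ,
        pdx (fun q => (pdt u q) ^ 2 * pdy u q) p
          + pdy (fun q => (pdt u q) ^ 2 * pdx u q) p = 0)) ∧
    (∀ p₁ p₂ p₃ : ℝ,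
      (![(0 : ℝ), p₁ ^ 2 * p₃, p₁ ^ 2 * p₂] ⬝ᵥ
        ((!![0, p₃ / 2, p₂ / 2; p₃ / 2, 0, p₁ / 2; p₂ / 2, p₁ / 2,
            (0 : ℝ)]).adjugate *ᵥ ![(0 : ℝ), p₁ ^ 2 * p₃, p₁ ^ 2 * p₂]) = 0) ∧
      (![p₂ ^ 2 * p₃, (0 : ℝ), p₂ ^ 2 * p₁] ⬝ᵥ
        ((!![0, p₃ / 2, p₂ / 2; p₃ / 2, 0, p₁ / 2; p₂ / 2, p₁ / 2,
            (0 : ℝ)]).adjugate *ᵥ ![p₂ ^ 2 * p₃, (0 : ℝ), p₂ ^ 2 * p₁]) = 0) ∧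
      (![p₃ ^ 2 * p₂, p₃ ^ 2 * p₁, (0 : ℝ)] ⬝ᵥ
        ((!![0, p₃ / 2, p₂ / 2; p₃ / 2, 0, p₁ / 2; p₂ / 2, p₁ / 2,
            (0 : ℝ)]).adjugate *ᵥ ![p₃ ^ 2 * p₂, p₃ ^ 2 * p₁, (0 : ℝ)]) = 0)) := by
  have hS (p : ℝ × ℝ × ℝ) : gradHessCyclicSum u p (1, 0, 0) (0, 1, 0) (0, 0, 1) = 0 :=
    (pdt_mul_pdy_pdx_add_eq_gradHessCyclicSum hu p).symm.trans (heq p)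
  have hflux := hu.differentiable_fderiv_apply_sq_mul
  have hu' : Differentiable ℝ u := hu.differentiable two_ne_zero
  simp only [pdx_eq_fderiv hu', pdy_eq_fderiv hu', pdt_eq_fderiv hu']
  refine ⟨⟨fun p => ?_, fun p => ?_, fun p => ?_⟩, fun p₁ p₂ p₃ => ⟨?_, ?_, ?_⟩⟩
  · rw [pdy_eq_fderiv (hflux _ _), pdt_eq_fderiv (hflux _ _),
      fderiv_sq_mul_add_fderiv_sq_mul hu.contDiffAt, hS, mul_zero]
  · rw [pdx_eq_fderiv (hflux _ _), pdt_eq_fderiv (hflux _ _),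
      fderiv_sq_mul_add_fderiv_sq_mul hu.contDiffAt,
      gradHessCyclicSum_swap (hu.contDiffAt.isSymmSndFDerivAt (by simp)), hS, mul_zero]
  · rw [pdx_eq_fderiv (hflux _ _), pdy_eq_fderiv (hflux _ _),
      fderiv_sq_mul_add_fderiv_sq_mul hu.contDiffAt, gradHessCyclicSum_rotate, hS, mul_zero]
  all_goals rw [dotProduct_adjugate_symbol_mulVec]; ring
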